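/- Let N_{K₁} and N_{K₂} be neighborhood filters in a coarse proximity space (X,B,b) with closed centers K₁, K₂ ⊆ UX. Then there exist A ∈ N_{K₁} and B ∈ N_{K₂} with A b̄ B if and only if K₁ ∩ K₂ = ∅. -/

import Mathlib

open Set

universe u
variable {X : Type u}

/-- The axioms of a coarse proximity structure: a bornology `B` (contains singletons,
closed under subsets and finite unions) and a relation `b` satisfying symmetry,
unboundedness of related sets, relatedness of sets with unbounded intersection,
the union axiom, and the strong axiom. -/
structure IsCoarseProximity (B : Set (Set X)) (b : Set X → Set X → Prop) : Prop where
  singleton_mem : ∀ x : X, {x} ∈ B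
  subset_mem : ∀ A C : Set X, A ∈ B → C ⊆ A → C ∈ B
  union_mem : ∀ A C : Set X, A ∈ B → C ∈ B → A ∪ C ∈ B
  symm : ∀ A C : Set X, b A C → b C A
  unbounded_of_rel : ∀ A C : Set X, b A C → A ∉ B ∧ C ∉ B
  rel_of_inter : ∀ A C : Set X, A ∩ C ∉ B → b A C
  union_iff : ∀ A C D : Set X, b (A ∪ C) D ↔ b A D ∨ b C D
  strong : ∀ A C : Set X, ¬ b A C → ∃ E : Set X, ¬ b A E ∧ ¬ b (univ \ E) C

/-- A coarse proximity space structure on `X`. -/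
structure CoarseProximity (X : Type u) where
  B : Set (Set X)
  b : Set X → Set X → Prop
  isCP : IsCoarseProximity B b

/-- The weak asymptotic resemblance induced by a coarse proximity. -/
def phi (cp : CoarseProximity X) (A C : Set X) : Prop :=
  (∀ C' ⊆ C, C' ∉ cp.B → cp.b A C') ∧ (∀ A' ⊆ A, A' ∉ cp.B → cp.b A' C)

/-- The discrete extension of the coarse proximity `b`. -/
def deltaExt (cp : CoarseProximity X) (A C : Set X) : Prop :=
  (A ∩ C).Nonempty ∨ cp.b A C

/-- A cluster in the proximity space given by the discrete extension of `b`: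
any two members are close, any set close to all members is a member, and a union
belongs only if one of the pieces does. -/
structure IsCluster (cp : CoarseProximity X) (σ : Set (Set X)) : Prop where
  close : ∀ A ∈ σ, ∀ C ∈ σ, deltaExt cp A C
  mem_of_close : ∀ C : Set X, (∀ A ∈ σ, deltaExt cp C A) → C ∈ σ
  union_cases : ∀ A C : Set X, A ∪ C ∈ σ → A ∈ σ ∨ C ∈ σ

/-- The boundary `𝒰X` of the coarse proximity space: clusters (in the Smirnov
compactification of the discrete extension) containing no bounded set. -/
def UX (cp : CoarseProximity X) : Set (Set (Set X)) :=
  {σ | IsCluster cp σ ∧ ∀ A ∈ σ, A ∉ cp.B}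

/-- The trace `A' = cl_𝔛(A) ∩ 𝒰X` of `A ⊆ X` in the boundary; a cluster of the
boundary lies in the closure of `A` in the Smirnov compactification iff `A` is a
member of the cluster. -/
def trace (cp : CoarseProximity X) (A : Set X) : Set (Set (Set X)) :=
  {σ ∈ UX cp | A ∈ σ}

/-- Relative closure in a subspace `Y` of the Smirnov compactification: a cluster
`σ ∈ Y` lies in the closure of `S ⊆ Y` iff every subset of `X` absorbing `S`
(i.e. belonging to every cluster of `S`) belongs to `σ`. -/
def clRel (Y S : Set (Set (Set X))) : Set (Set (Set X)) :=
  {σ ∈ Y | ∀ C : Set X, (∀ τ ∈ S, C ∈ τ) → C ∈ σ}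

/-- A subset of `Y` is relatively closed iff it contains its relative closure. -/
def relClosed (Y K : Set (Set (Set X))) : Prop :=
  K ⊆ Y ∧ clRel Y K ⊆ K

/-- Interior in the boundary `𝒰X`. -/
def intU (cp : CoarseProximity X) (S : Set (Set (Set X))) : Set (Set (Set X)) :=
  UX cp \ clRel (UX cp) (UX cp \ S)

/-- Closed subsets of the boundary `𝒰X`. -/
def IsClosedU (cp : CoarseProximity X) (K : Set (Set (Set X))) : Prop :=
  relClosed (UX cp) K

/-- Open subsets of the boundary `𝒰X`. -/
def IsOpenU (cp : CoarseProximity X) (U : Set (Set (Set X))) : Prop :=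
  U ⊆ UX cp ∧ IsClosedU cp (UX cp \ U)

/-- The preorder `A ⪯ B` iff `A' ⊆ int(B')` or `A' = B'`. -/
def preRel (cp : CoarseProximity X) (A C : Set X) : Prop :=
  trace cp A ⊆ intU cp (trace cp C) ∨ trace cp A = trace cp C

/-- A neighborhood filter in a coarse proximity space. -/
structure IsNbhdFilter (cp : CoarseProximity X) (N : Set (Set X)) : Prop where
  nonempty : N.Nonempty
  directed : ∀ A ∈ N, ∀ C ∈ N, ∃ D ∈ N, preRel cp D A ∧ preRel cp D C
  upward : ∀ A ∈ N, ∀ C : Set X, preRel cp A C → C ∈ N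
  refine : ∀ A ∈ N, ∃ C ∈ N, trace cp C ⊆ intU cp (trace cp A)

/-- The neighborhood filter `N_K = {A ⊆ X : K ⊆ int(A')}` of a closed `K ⊆ 𝒰X`. -/
def nbhdFilter (cp : CoarseProximity X) (K : Set (Set (Set X))) : Set (Set X) :=
  {A : Set X | K ⊆ intU cp (trace cp A)}

section Helpers

variable (cp : CoarseProximity X)

lemma b_mono_left {A A' C : Set X} (h : cp.b A C) (hs : A ⊆ A') : cp.b A' C := by
  have h2 := (cp.isCP.union_iff A A' C).mpr (Or.inl h)
  rwa [union_eq_self_of_subset_left hs] at h2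

lemma b_mono_right {A C C' : Set X} (h : cp.b A C) (hs : C ⊆ C') : cp.b A C' :=
  cp.isCP.symm _ _ (b_mono_left cp (cp.isCP.symm _ _ h) hs)

lemma delta_symm {A C : Set X} (h : deltaExt cp A C) : deltaExt cp C A := by
  rcases h with h | h
  · exact Or.inl (by rwa [inter_comm])
  · exact Or.inr (cp.isCP.symm _ _ h)

lemma delta_mono {A A' C C' : Set X} (h : deltaExt cp A C) (h1 : A ⊆ A') (h2 : C ⊆ C') :
    deltaExt cp A' C' := by
  rcases h with h | h
  · exact Or.inl (h.mono (inter_subset_inter h1 h2))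
  · exact Or.inr (b_mono_right cp (b_mono_left cp h h1) h2)

lemma delta_strong {A C : Set X} (h : ¬ deltaExt cp A C) :
    ∃ E : Set X, ¬ deltaExt cp A E ∧ ¬ deltaExt cp (univ \ E) C := by
  have hne : A ∩ C = ∅ := by
    by_contra hx
    exact h (Or.inl (nonempty_iff_ne_empty.mpr hx))
  have hb : ¬ cp.b A C := fun hb => h (Or.inr hb)
  obtain ⟨E₀, hAE₀, hE₀C⟩ := cp.isCP.strong A C hb
  refine ⟨(E₀ \ A) ∪ C, ?_, ?_⟩
  · rintro (⟨x, hxA, hxE⟩ | hb')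
    · rcases hxE with ⟨_, hxnA⟩ | hxC
      · exact hxnA hxA
      · have hx : x ∈ A ∩ C := ⟨hxA, hxC⟩
        rw [hne] at hx
        exact hx
    · have := cp.isCP.symm _ _ hb'
      rcases (cp.isCP.union_iff _ _ _).mp this with h1 | h1
      · exact hAE₀ (b_mono_right cp (cp.isCP.symm _ _ h1) diff_subset)
      · exact hb (cp.isCP.symm _ _ h1)
  · rintro (⟨x, hx1, hx2⟩ | hb')
    · exact hx1.2 (Or.inr hx2)
    · have hsub : univ \ ((E₀ \ A) ∪ C) ⊆ (univ \ E₀) ∪ A := by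
        rintro x ⟨-, hx⟩
        by_cases hxA : x ∈ A
        · exact Or.inr hxA
        · refine Or.inl ⟨mem_univ x, fun hxE₀ => hx (Or.inl ⟨hxE₀, hxA⟩)⟩
      rcases (cp.isCP.union_iff _ _ _).mp (b_mono_left cp hb' hsub) with h1 | h1
      · exact hE₀C h1
      · exact hb h1

lemma cluster_nonempty {σ : Set (Set X)} (hσ : IsCluster cp σ) : σ.Nonempty := by
  by_contra h
  rw [not_nonempty_iff_eq_empty] at h
  have := hσ.mem_of_close ∅ (by simp [h])
  simp [h] at this

lemma cluster_upward {σ : Set (Set X)} (hσ : IsCluster cp σ) {S T : Set X}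
    (hS : S ∈ σ) (hsub : S ⊆ T) : T ∈ σ :=
  hσ.mem_of_close T fun A hA => delta_mono cp (hσ.close S hS A hA) hsub (subset_refl A)

lemma cluster_not_mem_of_subset {σ : Set (Set X)} (hσ : IsCluster cp σ) {S T : Set X}
    (hT : T ∉ σ) (hsub : S ⊆ T) : S ∉ σ :=
  fun hS => hT (cluster_upward cp hσ hS hsub)

lemma exists_far_of_not_mem {σ : Set (Set X)} (hσ : IsCluster cp σ) {C : Set X}
    (hC : C ∉ σ) : ∃ T ∈ σ, ¬ deltaExt cp C T := by
  by_contra h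
  push_neg at h
  exact hC (hσ.mem_of_close C h)

lemma univ_mem_cluster (hemp : ∅ ∈ cp.B) {σ : Set (Set X)} (hσ : σ ∈ UX cp) :
    (univ : Set X) ∈ σ := by
  refine hσ.1.mem_of_close univ fun A hA => Or.inl ?_
  rw [univ_inter]
  rw [nonempty_iff_ne_empty]
  intro h
  exact hσ.2 A hA (h ▸ hemp)

lemma compl_mem_of_not_mem (hemp : ∅ ∈ cp.B) {σ : Set (Set X)} (hσ : σ ∈ UX cp)
    {S : Set X} (hS : S ∉ σ) : Sᶜ ∈ σ := by
  have hu : S ∪ Sᶜ ∈ σ := by rw [union_compl_self]; exact univ_mem_cluster cp hemp hσ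
  rcases hσ.1.union_cases S Sᶜ hu with h | h
  · exact absurd h hS
  · exact h

lemma b_of_mem_mem {σ : Set (Set X)} (hσ : σ ∈ UX cp) {A B : Set X}
    (hA : A ∈ σ) (hB : B ∈ σ) : cp.b A B := by
  by_contra hb
  have hbd : A ∩ B ∈ cp.B := by
    by_contra h
    exact hb (cp.isCP.rel_of_inter _ _ h)
  have hAB : A \ B ∈ σ := by
    rcases hσ.1.union_cases (A \ B) (A ∩ B) (by rw [diff_union_inter]; exact hA) with h | h
    · exact h
    · exact absurd hbd (hσ.2 _ h)
  have hBA : B \ A ∈ σ := by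
    rcases hσ.1.union_cases (B \ A) (B ∩ A) (by rw [diff_union_inter]; exact hB) with h | h
    · exact h
    · exact absurd (inter_comm B A ▸ hbd) (hσ.2 _ h)
  rcases hσ.1.close _ hAB _ hBA with ⟨x, hx1, hx2⟩ | hb'
  · exact hx2.2 hx1.1
  · exact hb (b_mono_right cp (b_mono_left cp hb' diff_subset) diff_subset)

lemma intU_subset {S : Set (Set (Set X))} : intU cp S ⊆ S := by
  rintro σ ⟨hUX, hncl⟩
  by_contra hS
  exact hncl ⟨hUX, fun C hC => hC σ ⟨hUX, hS⟩⟩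

lemma mem_intU_of_compl_not_mem (hemp : ∅ ∈ cp.B) {σ : Set (Set X)} (hσ : σ ∈ UX cp)
    {C : Set X} (h : Cᶜ ∉ σ) : σ ∈ intU cp (trace cp C) := by
  refine ⟨hσ, fun hcl => ?_⟩
  refine h (hcl.2 Cᶜ fun τ hτ => ?_)
  exact compl_mem_of_not_mem cp hemp hτ.1 fun hC => hτ.2 ⟨hτ.1, hC⟩

lemma mem_nbhdFilter_of (hemp : ∅ ∈ cp.B) {K : Set (Set (Set X))} {A : Set X}
    (hK : K ⊆ UX cp) (h : ∀ ρ ∈ K, Aᶜ ∉ ρ) : A ∈ nbhdFilter cp K :=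
  fun σ hσ => mem_intU_of_compl_not_mem cp hemp (hK hσ) (h σ hσ)

lemma finUnion_not_mem (hemp : ∅ ∈ cp.B) {σ : Set (Set X)} (hσ : σ ∈ UX cp)
    {ι : Type*} (t : Finset ι) (f : ι → Set X)
    (h : ∀ i ∈ t, f i ∉ σ) : (⋃ i ∈ t, f i) ∉ σ := by
  classical
  induction t using Finset.induction_on with
  | empty => simpa using fun hc => hσ.2 _ hc hemp
  | @insert a s ha ih =>
    rw [Finset.set_biUnion_insert]
    intro hmem
    rcases hσ.1.union_cases _ _ hmem with hc | hc
    · exact h a (Finset.mem_insert_self a s) hc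
    · exact ih (fun i hi => h i (Finset.mem_insert_of_mem hi)) hc

lemma b_finUnion (hemp : ∅ ∈ cp.B) {D : Set X} {ι : Type*} (t : Finset ι) (f : ι → Set X)
    (h : cp.b (⋃ i ∈ t, f i) D) : ∃ i ∈ t, cp.b (f i) D := by
  classical
  induction t using Finset.induction_on with
  | empty =>
    simp only [Finset.notMem_empty, Set.iUnion_of_empty, Set.iUnion_empty] at h ⊢
    exact absurd hemp ((cp.isCP.unbounded_of_rel _ _ h).1)
  | @insert a s ha ih =>
    rw [Finset.set_biUnion_insert] at h
    rcases (cp.isCP.union_iff _ _ _).mp h with hc | hc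
    · exact ⟨a, Finset.mem_insert_self a s, hc⟩
    · obtain ⟨i, hi, hb⟩ := ih hc
      exact ⟨i, Finset.mem_insert_of_mem hi, hb⟩

lemma mem_of_sUnion_mem (hemp : ∅ ∈ cp.B) {ρ : Set (Set X)} (hρ : ρ ∈ UX cp)
    {u : Set (Set X)} (hu : u.Finite) (h : ⋃₀ u ∈ ρ) : ∃ s ∈ u, s ∈ ρ := by
  induction u, hu using Set.Finite.induction_on with
  | empty => simp only [sUnion_empty] at h; exact absurd hemp (hρ.2 _ h)
  | insert ha hs ih =>
    rename_i a u'
    rw [sUnion_insert] at h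
    rcases hρ.1.union_cases _ _ h with hc | hc
    · exact ⟨a, mem_insert a u', hc⟩
    · obtain ⟨s, hsu, hsρ⟩ := ih hc
      exact ⟨s, mem_insert_of_mem a hsu, hsρ⟩

lemma sigmaU_mem_UX (hemp : ∅ ∈ cp.B) (𝒰 : Ultrafilter X) (hub : ∀ F ∈ 𝒰, F ∉ cp.B) :
    {S : Set X | ∀ F ∈ 𝒰, deltaExt cp S F} ∈ UX cp := by
  have hUmem : ∀ F ∈ 𝒰, F ∈ {S : Set X | ∀ F ∈ 𝒰, deltaExt cp S F} := by
    intro F hF F' hF'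
    exact Or.inl (Ultrafilter.nonempty_of_mem (Filter.inter_mem hF hF'))
  constructor
  · constructor
    · intro A hA C hC
      by_contra hδ
      obtain ⟨E, hAE, hEC⟩ := delta_strong cp hδ
      rcases 𝒰.mem_or_compl_mem E with hE | hE
      · exact hAE (hA E hE)
      · refine hEC ?_
        have := hC Eᶜ hE
        rw [compl_eq_univ_diff] at this
        exact delta_symm cp this
    · intro C h F hF
      exact h F (hUmem F hF)
    · intro A C hAC
      by_contra hnot
      push_neg at hnot
      obtain ⟨hA, hC⟩ := hnot
      simp only [mem_setOf_eq, not_forall] at hA hC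
      obtain ⟨F₁, hF₁, hnA⟩ := hA
      obtain ⟨F₂, hF₂, hnC⟩ := hC
      have hF : F₁ ∩ F₂ ∈ 𝒰 := Filter.inter_mem hF₁ hF₂
      have hδ := hAC (F₁ ∩ F₂) hF
      have hsplit : deltaExt cp A (F₁ ∩ F₂) ∨ deltaExt cp C (F₁ ∩ F₂) := by
        rcases hδ with ⟨x, hx1, hx2⟩ | hb
        · rcases hx1 with hx1 | hx1
          · exact Or.inl (Or.inl ⟨x, hx1, hx2⟩)
          · exact Or.inr (Or.inl ⟨x, hx1, hx2⟩)
        · rcases (cp.isCP.union_iff _ _ _).mp hb with hb | hb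
          · exact Or.inl (Or.inr hb)
          · exact Or.inr (Or.inr hb)
      rcases hsplit with hd | hd
      · exact hnA (delta_mono cp hd (subset_refl A) inter_subset_left)
      · exact hnC (delta_mono cp hd (subset_refl C) inter_subset_right)
  · intro S hS
    intro hSB
    have hSn : S ∉ 𝒰 := fun h => hub S h hSB
    have hSc : Sᶜ ∈ 𝒰 := Ultrafilter.compl_mem_iff_notMem.mpr hSn
    rcases hS Sᶜ hSc with ⟨x, hx1, hx2⟩ | hb
    · exact hx2 hx1
    · exact (cp.isCP.unbounded_of_rel _ _ hb).1 hSB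

end Helpers

lemma compact_absorb (cp : CoarseProximity X) (hemp : ∅ ∈ cp.B) {K : Set (Set (Set X))}
    (hK : IsClosedU cp K) {ι : Type u} (S : ι → Set X)
    (H : ∀ t : Finset ι, ∃ ρ ∈ K, ∀ i ∈ t, S i ∈ ρ) : ∃ ρ ∈ K, ∀ i, S i ∈ ρ := by
  classical
  let D : Set (Set X) :=
    {F | (∀ i, deltaExt cp (S i) F) ∧ ∀ C : Set X, (∀ τ ∈ K, C ∈ τ) → deltaExt cp C F}
  let G : Set (Set X) := {s | s ∈ compl '' (Dᶜ ∪ cp.B)}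
  have hFIP : ∀ t ⊆ G, t.Finite → (⋂₀ t).Nonempty := by
    intro t hts htf
    -- choose index witnesses
    let g : Set X → Finset ι := fun s =>
      if h : ∃ i, ¬ deltaExt cp (S i) sᶜ then {h.choose} else ∅
    obtain ⟨ρ, hρK, hρS⟩ := H (htf.toFinset.biUnion g)
    have hρUX : ρ ∈ UX cp := hK.1 hρK
    have hcnot : ∀ s ∈ t, sᶜ ∉ ρ := by
      intro s hst
      obtain ⟨F, hF, hFs⟩ := hts hst
      have hFeq : F = sᶜ := by rw [← hFs, compl_compl]
      rcases hF with hFD | hFB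
      · -- F ∉ D
        rw [hFeq] at hFD
        have hFD' : ¬ ((∀ i, deltaExt cp (S i) sᶜ) ∧
            ∀ C : Set X, (∀ τ ∈ K, C ∈ τ) → deltaExt cp C sᶜ) := hFD
        rw [not_and_or, not_forall, not_forall] at hFD'
        rcases hFD' with ⟨i, hi⟩ | ⟨C, hC⟩
        · -- index witness
          have hex : ∃ i, ¬ deltaExt cp (S i) sᶜ := ⟨i, hi⟩
          have hmem : hex.choose ∈ htf.toFinset.biUnion g := by
            refine Finset.mem_biUnion.mpr ⟨s, htf.mem_toFinset.mpr hst, ?_⟩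
            simp only [g, dif_pos hex, Finset.mem_singleton]
          have hSρ := hρS _ hmem
          intro hsρ
          exact hex.choose_spec (hρUX.1.close _ hSρ _ hsρ)
        · obtain ⟨hCabs, hCd⟩ := _root_.not_imp.mp hC
          have hCρ : C ∈ ρ := hCabs ρ hρK
          intro hsρ
          exact hCd (hρUX.1.close _ hCρ _ hsρ)
      · rw [hFeq] at hFB
        exact fun hsρ => (hρUX.2 _ hsρ) hFB
    by_contra hne
    rw [not_nonempty_iff_eq_empty] at hne
    have huniv : ⋃₀ (compl '' t) ∈ ρ := by
      have : ⋃₀ (compl '' t) = (⋂₀ t)ᶜ := by rw [compl_sInter]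
      rw [this, hne, compl_empty]
      exact univ_mem_cluster cp hemp hρUX
    obtain ⟨s', hs't, hs'ρ⟩ := mem_of_sUnion_mem cp hemp hρUX (htf.image compl) huniv
    obtain ⟨s, hst, rfl⟩ := hs't
    exact hcnot s hst hs'ρ
  have hNB : Filter.NeBot (Filter.generate G) := Filter.generate_neBot_iff.mpr hFIP
  let 𝒰 : Ultrafilter X := Ultrafilter.of (Filter.generate G)
  have hle : (𝒰 : Filter X) ≤ Filter.generate G := Ultrafilter.of_le _
  have hUG : ∀ F : Set X, F ∉ D ∨ F ∈ cp.B → Fᶜ ∈ 𝒰 := by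
    intro F hF
    exact hle (Filter.GenerateSets.basic ⟨F, hF, rfl⟩)
  have hmemD : ∀ F ∈ 𝒰, F ∈ D := by
    intro F hF
    by_contra hFD
    have := hUG F (Or.inl hFD)
    exact (Ultrafilter.compl_mem_iff_notMem.mp this) hF
  have hmemB : ∀ F ∈ 𝒰, F ∉ cp.B := by
    intro F hF hFB
    exact (Ultrafilter.compl_mem_iff_notMem.mp (hUG F (Or.inr hFB))) hF
  set ρ := {S' : Set X | ∀ F ∈ 𝒰, deltaExt cp S' F} with hρdef
  have hρUX : ρ ∈ UX cp := sigmaU_mem_UX cp hemp 𝒰 hmemB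
  have hmemD' : ∀ F ∈ 𝒰, (∀ i, deltaExt cp (S i) F) ∧
      ∀ C : Set X, (∀ τ ∈ K, C ∈ τ) → deltaExt cp C F := hmemD
  have hρK : ρ ∈ K := by
    apply hK.2
    refine ⟨hρUX, fun C hC => ?_⟩
    intro F hF
    exact (hmemD' F hF).2 C hC
  exact ⟨ρ, hρK, fun i F hF => (hmemD' F hF).1 i⟩

/-- the filters `N_{K₁}` and `N_{K₂}` diverge (there are members
`A ∈ N_{K₁}`, `B ∈ N_{K₂}` with `A b̄ B`) iff `K₁ ∩ K₂ = ∅`. -/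
theorem diverge_iff_centers_disjoint (cp : CoarseProximity X)
    (K₁ K₂ : Set (Set (Set X))) (hK₁ : IsClosedU cp K₁) (hK₂ : IsClosedU cp K₂) :
    (∃ A ∈ nbhdFilter cp K₁, ∃ B ∈ nbhdFilter cp K₂, ¬ cp.b A B) ↔ K₁ ∩ K₂ = ∅ := by
  classical
  constructor
  · rintro ⟨A, hA, B, hB, hb⟩
    rw [eq_empty_iff_forall_notMem]
    rintro σ ⟨hσ1, hσ2⟩
    have hσA : σ ∈ trace cp A := intU_subset cp (hA hσ1)
    have hσB : σ ∈ trace cp B := intU_subset cp (hB hσ2)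
    exact hb (b_of_mem_mem cp hσA.1 hσA.2 hσB.2)
  · intro hdisj
    by_cases hemp : ∅ ∈ cp.B
    · -- main case
      have hdata : ∀ σ ∈ K₁, ∃ E F : Set X, E ∉ σ ∧ ¬ deltaExt cp (univ \ E) F ∧
          ∀ τ ∈ K₂, (univ \ F) ∉ τ := by
        intro σ hσ1
        have hσUX : σ ∈ UX cp := hK₁.1 hσ1
        have hσn2 : σ ∉ K₂ := fun h => by
          have : σ ∈ K₁ ∩ K₂ := ⟨hσ1, h⟩
          rw [hdisj] at this
          exact this
        have hσncl : σ ∉ clRel (UX cp) K₂ := fun h => hσn2 (hK₂.2 h)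
        have hB : ∃ B : Set X, (∀ τ ∈ K₂, B ∈ τ) ∧ B ∉ σ := by
          by_contra hc
          push_neg at hc
          exact hσncl ⟨hσUX, fun C hC => hc C hC⟩
        obtain ⟨B, hBabs, hBσ⟩ := hB
        obtain ⟨T, hTσ, hTB⟩ := exists_far_of_not_mem cp hσUX.1 hBσ
        have hTB' : ¬ deltaExt cp T B := fun h => hTB (delta_symm cp h)
        obtain ⟨E, hTE, hEB⟩ := delta_strong cp hTB'
        obtain ⟨F, hEF, hFB⟩ := delta_strong cp hEB
        refine ⟨E, F, ?_, hEF, ?_⟩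
        · exact fun hEσ => hTE (hσUX.1.close T hTσ E hEσ)
        · intro τ hτ hFτ
          exact hFB ((hK₂.1 hτ).1.close _ hFτ _ (hBabs τ hτ))
      choose! E F h1 h2 h3 using hdata
      have hnc : ¬ ∀ t : Finset {σ // σ ∈ K₁}, ∃ ρ ∈ K₁, ∀ i ∈ t, E i.1 ∈ ρ := by
        intro H
        obtain ⟨ρ, hρ, hall⟩ := compact_absorb cp hemp hK₁ (fun i : {σ // σ ∈ K₁} => E i.1) H
        exact h1 ρ hρ (hall ⟨ρ, hρ⟩)
      push_neg at hnc
      obtain ⟨t, ht⟩ := hnc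
      refine ⟨⋃ i ∈ t, (univ \ E i.1), ?_, ⋂ i ∈ t, F i.1, ?_, ?_⟩
      · refine mem_nbhdFilter_of cp hemp hK₁.1 ?_
        intro ρ hρ
        obtain ⟨i, hit, hEρ⟩ := ht ρ hρ
        refine cluster_not_mem_of_subset cp (hK₁.1 hρ).1 hEρ ?_
        intro x hx
        by_contra hxE
        exact hx (mem_biUnion hit ⟨mem_univ x, hxE⟩)
      · refine mem_nbhdFilter_of cp hemp hK₂.1 ?_
        intro τ hτ
        have heq : (⋂ i ∈ t, F i.1)ᶜ = ⋃ i ∈ t, (F i.1)ᶜ := by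
          simp [compl_iInter]
        rw [heq]
        refine finUnion_not_mem cp hemp (hK₂.1 hτ) t (fun i : {σ // σ ∈ K₁} => (F i.1)ᶜ) (fun i hi => ?_)
        show (F i.1)ᶜ ∉ τ
        rw [compl_eq_univ_diff]
        exact h3 i.1 i.2 τ hτ
      · intro hb
        obtain ⟨i, hit, hbi⟩ := b_finUnion cp hemp t (fun i : {σ // σ ∈ K₁} => univ \ E i.1) hb
        have hsub : (⋂ j ∈ t, F j.1) ⊆ F i.1 := iInter₂_subset i hit
        exact h2 i.1 i.2 (Or.inr (b_mono_right cp hbi hsub))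
    · -- degenerate case: no element of X, ∅ unbounded
      exfalso
      have hX : IsEmpty X := by
        by_contra hne
        rw [not_isEmpty_iff] at hne
        obtain ⟨x⟩ := hne
        exact hemp (cp.isCP.subset_mem {x} ∅ (cp.isCP.singleton_mem x) (empty_subset _))
      have hallempty : ∀ S : Set X, S = ∅ := fun S => eq_empty_of_isEmpty S
      have hnb : ∀ S : Set X, S ∉ cp.B := fun S => (hallempty S) ▸ hemp
      have hσ₀ : (univ : Set (Set X)) ∈ UX cp := by
        refine ⟨⟨?_, ?_, ?_⟩, fun A _ => hnb A⟩
        · intro A _ C _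
          refine Or.inr (cp.isCP.rel_of_inter A C (hnb _))
        · intro C _
          exact mem_univ C
        · intro A C _
          exact Or.inl (mem_univ A)
      have h₁ : (univ : Set (Set X)) ∈ K₁ := hK₁.2 ⟨hσ₀, fun C _ => mem_univ C⟩
      have h₂ : (univ : Set (Set X)) ∈ K₂ := hK₂.2 ⟨hσ₀, fun C _ => mem_univ C⟩
      have : (univ : Set (Set X)) ∈ K₁ ∩ K₂ := ⟨h₁, h₂⟩
      rw [hdisj] at this
      exact this
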